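/- Let Ω ⊆ ℝ^d be a bounded open set and f : Ω → [0,∞) continuous. Suppose u : Ω → ℝ is lower semicontinuous, convex on Ω, and is a viscosity supersolution of the Bellman equation, i.e. for every φ ∈ C²(Ω) such that u − φ attains a local minimum at x ∈ Ω one has H(D²φ(x), f(x)) ≥ 0. Then u is a viscosity supersolution of the Monge–Ampère equation on the set of convex functions: for every convex φ ∈ C²(Ω) such that u − φ attains a local minimum at x ∈ Ω, one has M(D²φ(x), f(x)) ≥ 0. -/

import Mathlib

open Matrix Set

/-- The set 𝐒₁ of positive semidefinite symmetric d×d real matrices with unit trace. -/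
def S1set (d : ℕ) : Set (Matrix (Fin d) (Fin d) ℝ) :=
  {B | B.PosSemidef ∧ B.trace = 1}

/-- The value −B:A + f·(det B)^(1/d) appearing under the supremum of the Bellman operator. -/
noncomputable def bval (d : ℕ) (A B : Matrix (Fin d) (Fin d) ℝ) (f : ℝ) : ℝ :=
  -((B * A).trace) + f * B.det ^ ((1 : ℝ) / d)

/-- The Bellman operator H(A,f) = sup_{B ∈ 𝐒₁} (−B:A + f·(det B)^(1/d)). -/
noncomputable def bellman (d : ℕ) (A : Matrix (Fin d) (Fin d) ℝ) (f : ℝ) : ℝ :=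
  sSup ((fun B => bval d A B f) '' S1set d)

/-- The Monge–Ampère operator M(A,f) = (f/d)^d − det A. -/
noncomputable def MAop (d : ℕ) (A : Matrix (Fin d) (Fin d) ℝ) (f : ℝ) : ℝ :=
  (f / d) ^ d - A.det

/-- The Hessian matrix D²φ(x) of φ : ℝ^d → ℝ at x. -/
noncomputable def hessianM (d : ℕ) (φ : (Fin d → ℝ) → ℝ) (x : Fin d → ℝ) :
    Matrix (Fin d) (Fin d) ℝ :=
  fun i j => iteratedFDeriv ℝ 2 φ x ![Pi.single i 1, Pi.single j 1]

/-! At a touching point `x` the convex test function has a positive semidefinite Hessian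
`A = D²φ(x)`, and the Bellman supersolution property gives `H(A, f x) ≥ 0`. If we had
`det A > (f/d)^d`, then `A` would be positive definite, so `r • 1 ≤ A` for some `r > 0`, and for
`B ∈ 𝐒₁` the AM–GM inequality for the eigenvalues of `√A B √A` gives
`B:A ≥ d (det B)^{1/d} (det A)^{1/d}`. Interpolating between this and `B:A ≥ r` bounds
`−B:A + f (det B)^{1/d}` by `−(1 − f / (d (det A)^{1/d})) r < 0` uniformly in `B`,
so `H(A, f) < 0`. -/

open Filter Topology
open scoped MatrixOrder

namespace Matrix

variable {n : Type*} [Fintype n] [DecidableEq n]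

lemma PosSemidef.sqrt_mul_mul_sqrt {B : Matrix n n ℝ} (hB : B.PosSemidef) (A : Matrix n n ℝ) :
    (CFC.sqrt A * B * CFC.sqrt A).PosSemidef := by
  have h := hB.mul_mul_conjTranspose_same (CFC.sqrt A)
  rwa [(CFC.sqrt_nonneg A).posSemidef.isHermitian.eq] at h

lemma PosSemidef.trace_mul_eq_trace_sqrt_mul_mul_sqrt {A : Matrix n n ℝ} (hA : A.PosSemidef)
    (B : Matrix n n ℝ) : (B * A).trace = (CFC.sqrt A * B * CFC.sqrt A).trace := by
  rw [trace_mul_cycle, CFC.sqrt_mul_sqrt_self A hA.nonneg, trace_mul_comm]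

lemma PosSemidef.trace_mul_nonneg {A B : Matrix n n ℝ} (hA : A.PosSemidef) (hB : B.PosSemidef) :
    0 ≤ (B * A).trace := by
  rw [hA.trace_mul_eq_trace_sqrt_mul_mul_sqrt]
  exact (hB.sqrt_mul_mul_sqrt A).trace_nonneg

lemma PosSemidef.det_rpow_le_trace_div_card [Nonempty n] {C : Matrix n n ℝ} (hC : C.PosSemidef) :
    C.det ^ (1 / Fintype.card n : ℝ) ≤ C.trace / Fintype.card n := by
  have h := Real.geom_mean_le_arith_mean Finset.univ (fun _ => 1) hC.1.eigenvalues
    (fun _ _ => zero_le_one) (by simp [Fintype.card_pos]) (fun i _ => hC.eigenvalues_nonneg i)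
  simpa [hC.1.det_eq_prod_eigenvalues, hC.1.trace_eq_sum_eigenvalues] using h

lemma PosSemidef.det_mul_rpow_le_trace_mul_div_card [Nonempty n] {A B : Matrix n n ℝ}
    (hA : A.PosSemidef) (hB : B.PosSemidef) :
    (B.det * A.det) ^ (1 / Fintype.card n : ℝ) ≤ (B * A).trace / Fintype.card n := by
  have h := (hB.sqrt_mul_mul_sqrt A).det_rpow_le_trace_div_card
  rwa [← hA.trace_mul_eq_trace_sqrt_mul_mul_sqrt, det_mul, det_mul, mul_right_comm,
    ← det_mul, CFC.sqrt_mul_sqrt_self A hA.nonneg, mul_comm A.det] at h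

lemma PosSemidef.mul_trace_le_trace_mul {A B : Matrix n n ℝ} {r : ℝ} (hB : B.PosSemidef)
    (hrA : r • 1 ≤ A) : r * B.trace ≤ (B * A).trace := by
  have h := PosSemidef.trace_mul_nonneg (le_iff.mp hrA) hB
  rw [Matrix.mul_sub, trace_sub, Matrix.mul_smul, Matrix.mul_one, trace_smul, smul_eq_mul] at h
  linarith

lemma PosDef.exists_pos_smul_one_le [Nonempty n] {A : Matrix n n ℝ} (hA : A.PosDef) :
    ∃ r : ℝ, 0 < r ∧ r • 1 ≤ A := by
  simpa [Algebra.algebraMap_eq_smul_one] using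
    (CFC.exists_pos_algebraMap_le_iff hA.isStrictlyPositive.isSelfAdjoint).2
      fun _ hx => hA.isStrictlyPositive.spectrum_pos hx

end Matrix

section Bellman

variable {d : ℕ}

lemma S1set_nonempty [NeZero d] : (S1set d).Nonempty := by
  refine ⟨(d : ℝ)⁻¹ • 1, ?_, ?_⟩
  · exact PosSemidef.one.smul (by positivity)
  · simp [trace_smul, NeZero.ne]

lemma bval_le_of_smul_one_le [NeZero d] {A B : Matrix (Fin d) (Fin d) ℝ} {f r : ℝ}
    (hA : A.PosSemidef) (hrA : r • 1 ≤ A) (hf : 0 ≤ f) (hfA : f < d * A.det ^ (1 / d : ℝ))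
    (hB : B ∈ S1set d) :
    bval d A B f ≤ -((1 - f / (d * A.det ^ (1 / d : ℝ))) * r) := by
  obtain ⟨hBpsd, hBtr⟩ := hB
  set δ := (d : ℝ) * A.det ^ (1 / d : ℝ)
  set t := B.det ^ (1 / d : ℝ)
  have hδ : 0 < δ := hf.trans_lt hfA
  have hθ : 0 ≤ 1 - f / δ := sub_nonneg.mpr ((div_le_one hδ).mpr hfA.le)
  have htr_ge_r : r ≤ (B * A).trace := by
    simpa [hBtr] using hBpsd.mul_trace_le_trace_mul hrA
  have htr_ge_t : t * δ ≤ (B * A).trace := by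
    have h := hA.det_mul_rpow_le_trace_mul_div_card hBpsd
    rw [Fintype.card_fin, Real.mul_rpow hBpsd.det_nonneg hA.det_nonneg,
      le_div_iff₀ (Nat.cast_pos.mpr (NeZero.pos d))] at h
    linarith
  calc bval d A B f = -(B * A).trace + f / δ * (t * δ) := by
        simp only [bval, t]; field_simp
    _ ≤ -(B * A).trace + f / δ * (B * A).trace := by gcongr
    _ = -((1 - f / δ) * (B * A).trace) := by ring
    _ ≤ -((1 - f / δ) * r) := by gcongr

lemma det_le_of_bellman_nonneg {A : Matrix (Fin d) (Fin d) ℝ} {f : ℝ} (hA : A.PosSemidef)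
    (hf : 0 ≤ f) (hH : 0 ≤ bellman d A f) : A.det ≤ (f / d) ^ d := by
  rcases Nat.eq_zero_or_pos d with rfl | hd
  · simp
  have : NeZero d := ⟨hd.ne'⟩
  by_contra! hlt
  have hdet : 0 < A.det := lt_of_le_of_lt (by positivity) hlt
  obtain ⟨r, hr, hrA⟩ := (hA.posDef_iff_det_ne_zero.mpr hdet.ne').exists_pos_smul_one_le
  have hfA : f < d * A.det ^ (1 / d : ℝ) := by
    have h := (Real.lt_rpow_inv_iff_of_pos (by positivity) hdet.le (by positivity)).mpr
      (by rwa [Real.rpow_natCast] : (f / d) ^ (d : ℝ) < A.det)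
    rw [one_div]
    rwa [div_lt_iff₀' (by positivity)] at h
  have hθ : 0 < 1 - f / (d * A.det ^ (1 / d : ℝ)) :=
    sub_pos.mpr ((div_lt_one (hf.trans_lt hfA)).mpr hfA)
  have hH_neg : bellman d A f ≤ -((1 - f / (d * A.det ^ (1 / d : ℝ))) * r) :=
    csSup_le (S1set_nonempty.image _) fun _ ⟨B, hB, hBval⟩ =>
      hBval ▸ bval_le_of_smul_one_le hA hrA hf hfA hB
  nlinarith [mul_pos hθ hr]

end Bellman

section Hessian

lemma ConvexOn.nonneg_of_hasDerivAt_of_hasDerivAt {S : Set ℝ} {g g' : ℝ → ℝ} {t g'' : ℝ}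
    (hg : ConvexOn ℝ S g) (hS : S ∈ 𝓝 t) (hg' : ∀ s ∈ S, HasDerivAt g (g' s) s)
    (hg'' : HasDerivAt g' g'' t) : 0 ≤ g'' := by
  have hmono : MonotoneOn g' S :=
    (hg.monotoneOn_deriv fun s hs => (hg' s hs).differentiableAt).congr
      fun s hs => (hg' s hs).deriv
  have hacc : AccPt t (𝓟 S) := by
    simpa using (PerfectSpace.univ_preperfect t (mem_univ t)).nhds_inter hS
  exact hg''.hasDerivWithinAt.nonneg_of_monotoneOn hacc hmono

variable {E : Type*} [NormedAddCommGroup E] [NormedSpace ℝ E]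

lemma ConvexOn.fderiv_fderiv_apply_self_nonneg {Ω : Set E} {φ : E → ℝ} {x : E} (hΩ : IsOpen Ω)
    (hφ : ContDiffOn ℝ 2 φ Ω) (hcvx : ConvexOn ℝ Ω φ) (hx : x ∈ Ω) (v : E) :
    0 ≤ fderiv ℝ (fderiv ℝ φ) x v v := by
  set L : ℝ →ᵃ[ℝ] E := AffineMap.lineMap x (x + v)
  have hL : ∀ s, HasDerivAt L v s := fun s => by
    simpa using AffineMap.hasDerivAt_lineMap (a := x) (b := x + v) (x := s)
  have hS : L ⁻¹' Ω ∈ 𝓝 0 :=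
    (hΩ.preimage (AffineMap.lineMap_continuous)).mem_nhds (by simpa [L] using hx)
  have hφ' : ∀ y ∈ Ω, HasFDerivAt φ (fderiv ℝ φ y) y := fun y hy =>
    ((hφ.contDiffAt (hΩ.mem_nhds hy)).differentiableAt two_ne_zero).hasFDerivAt
  have hφ'' : HasFDerivAt (fderiv ℝ φ) (fderiv ℝ (fderiv ℝ φ) x) x :=
    (((hφ.contDiffAt (hΩ.mem_nhds hx)).fderiv_right (m := 1) le_rfl).differentiableAt
      one_ne_zero).hasFDerivAt
  refine (hcvx.comp_affineMap L).nonneg_of_hasDerivAt_of_hasDerivAt hS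
    (g' := fun s => fderiv ℝ φ (L s) v) (fun s hs => (hφ' _ hs).comp_hasDerivAt s (hL s)) ?_
  have hL0 : L 0 = x := by simp [L]
  rw [← hL0] at hφ''
  simpa [hL0] using (hφ''.comp_hasDerivAt 0 (hL 0)).clm_apply (hasDerivAt_const 0 v)

lemma hessianM_eq_toMatrix₂' {d : ℕ} (φ : (Fin d → ℝ) → ℝ) (x : Fin d → ℝ) :
    hessianM d φ x = LinearMap.toMatrix₂' ℝ (fderiv ℝ (fderiv ℝ φ) x).toLinearMap₁₂ := by
  ext i j
  simp [hessianM, iteratedFDeriv_two_apply]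

lemma ConvexOn.hessianM_posSemidef {d : ℕ} {Ω : Set (Fin d → ℝ)} {φ : (Fin d → ℝ) → ℝ}
    {x : Fin d → ℝ} (hΩ : IsOpen Ω) (hφ : ContDiffOn ℝ 2 φ Ω) (hcvx : ConvexOn ℝ Ω φ)
    (hx : x ∈ Ω) : (hessianM d φ x).PosSemidef := by
  have hsymm := (hφ.contDiffAt (hΩ.mem_nhds hx)).isSymmSndFDerivAt (by simp)
  refine posSemidef_iff_dotProduct_mulVec.mpr ⟨?_, fun v => ?_⟩
  · ext i j
    simp [hessianM_eq_toMatrix₂', hsymm (Pi.single i 1)]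
  · rw [star_trivial, ← Matrix.toLinearMap₂'_apply', hessianM_eq_toMatrix₂',
      Matrix.toLinearMap₂'_toMatrix']
    exact hcvx.fderiv_fderiv_apply_self_nonneg hΩ hφ hx v

end Hessian

theorem stmt_11_general (d : ℕ) (Ω : Set (Fin d → ℝ)) (hΩo : IsOpen Ω)
    (f : (Fin d → ℝ) → ℝ) (hf0 : ∀ x ∈ Ω, 0 ≤ f x)
    (u : (Fin d → ℝ) → ℝ)
    (hsup : ∀ φ : (Fin d → ℝ) → ℝ, ContDiffOn ℝ 2 φ Ω →
      ∀ x ∈ Ω, IsLocalMinOn (fun y => u y - φ y) Ω x →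
        0 ≤ bellman d (hessianM d φ x) (f x)) :
    ∀ φ : (Fin d → ℝ) → ℝ, ContDiffOn ℝ 2 φ Ω → ConvexOn ℝ Ω φ →
      ∀ x ∈ Ω, IsLocalMinOn (fun y => u y - φ y) Ω x →
        0 ≤ MAop d (hessianM d φ x) (f x) := by
  intro φ hφ hφcvx x hx hmin
  exact sub_nonneg.mpr <| det_le_of_bellman_nonneg (hφcvx.hessianM_posSemidef hΩo hφ hx)
    (hf0 x hx) (hsup φ hφ x hx hmin)

/-- A convex viscosity supersolution of the Bellman equation is a viscosity supersolution
of the Monge–Ampère equation on the set of convex functions. -/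
theorem stmt_11 (d : ℕ) (hd : 2 ≤ d) (Ω : Set (Fin d → ℝ)) (hΩo : IsOpen Ω)
    (hΩb : Bornology.IsBounded Ω)
    (f : (Fin d → ℝ) → ℝ) (hfc : ContinuousOn f Ω) (hf0 : ∀ x ∈ Ω, 0 ≤ f x)
    (u : (Fin d → ℝ) → ℝ) (hlsc : LowerSemicontinuousOn u Ω) (hucvx : ConvexOn ℝ Ω u)
    (hsup : ∀ φ : (Fin d → ℝ) → ℝ, ContDiffOn ℝ 2 φ Ω →
      ∀ x ∈ Ω, IsLocalMinOn (fun y => u y - φ y) Ω x →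
        0 ≤ bellman d (hessianM d φ x) (f x)) :
    ∀ φ : (Fin d → ℝ) → ℝ, ContDiffOn ℝ 2 φ Ω → ConvexOn ℝ Ω φ →
      ∀ x ∈ Ω, IsLocalMinOn (fun y => u y - φ y) Ω x →
        0 ≤ MAop d (hessianM d φ x) (f x) :=
  stmt_11_general d Ω hΩo f hf0 u hsup
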